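/- arXiv:2205.04645 — 2 statements merged into one kernel-verified Lean document; each statement's English description precedes it below -/
import Mathlib

section
/- Let H be the group presented by generators y₁, …, y₆ with relations: y_i² = 1 for all i; [y₁,y₂] = [y₁,y₃] = [y₂,y₃] = 1; [y₄,y₅] = [y₄,y₆] = [y₅,y₆] = 1; [y₁,y₄] = [y₂,y₅] = [y₃,y₆] = 1; y₁y₂y₃ = 1; and y₄y₅y₆ = 1. Then in H, [y₁y₄, y₂y₅] = 1, i.e., the elements y₁y₄ and y₂y₅ commute. -/
open scoped commutatorElement

/-- Relations of the group `H_{3,2}` (see paper). -/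
def relsH32 : Set (FreeGroup (Fin 6)) :=
  {r | ∃ i : Fin 6, r = FreeGroup.of i * FreeGroup.of i} ∪
  { ⁅FreeGroup.of (0 : Fin 6), FreeGroup.of 1⁆, ⁅FreeGroup.of (0 : Fin 6), FreeGroup.of 2⁆,
    ⁅FreeGroup.of (1 : Fin 6), FreeGroup.of 2⁆, ⁅FreeGroup.of (3 : Fin 6), FreeGroup.of 4⁆,
    ⁅FreeGroup.of (3 : Fin 6), FreeGroup.of 5⁆, ⁅FreeGroup.of (4 : Fin 6), FreeGroup.of 5⁆,
    ⁅FreeGroup.of (0 : Fin 6), FreeGroup.of 3⁆, ⁅FreeGroup.of (1 : Fin 6), FreeGroup.of 4⁆,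
    ⁅FreeGroup.of (2 : Fin 6), FreeGroup.of 5⁆,
    FreeGroup.of (0 : Fin 6) * FreeGroup.of 1 * FreeGroup.of 2,
    FreeGroup.of (3 : Fin 6) * FreeGroup.of 4 * FreeGroup.of 5 }

lemma relsH32_one {r : FreeGroup (Fin 6)} (h : r ∈ relsH32) :
    PresentedGroup.mk relsH32 r = 1 :=
  (QuotientGroup.eq_one_iff r).mpr (Subgroup.subset_normalClosure h)

/-- In `H_{3,2}` the elements `y₁y₄` and `y₂y₅` commute. -/
theorem stmt_8 :
    ⁅(PresentedGroup.of 0 * PresentedGroup.of 3 : PresentedGroup relsH32),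
      (PresentedGroup.of 1 * PresentedGroup.of 4 : PresentedGroup relsH32)⁆ = 1 := by
  set G := PresentedGroup relsH32
  have of_eq : ∀ i : Fin 6, PresentedGroup.mk relsH32 (FreeGroup.of i) =
      (PresentedGroup.of i : G) := fun i => rfl
  -- squares
  have hsq : ∀ i : Fin 6, (PresentedGroup.of i : G) * PresentedGroup.of i = 1 := by
    intro i
    have := relsH32_one (Or.inl ⟨i, rfl⟩)
    rwa [map_mul, of_eq] at this
  -- commutators
  have hcomm : ∀ i j : Fin 6, ⁅FreeGroup.of i, FreeGroup.of j⁆ ∈ relsH32 →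
      (PresentedGroup.of i : G) * PresentedGroup.of j
        = PresentedGroup.of j * PresentedGroup.of i := by
    intro i j h
    have := relsH32_one h
    rw [map_commutatorElement, of_eq, of_eq] at this
    exact (commutatorElement_eq_one_iff_mul_comm.mp this)
  set a : G := PresentedGroup.of 0 with ha_def
  set b : G := PresentedGroup.of 1 with hb_def
  set c : G := PresentedGroup.of 3 with hc_def
  set d : G := PresentedGroup.of 4 with hd_def
  set e : G := PresentedGroup.of 2 with he_def
  set f : G := PresentedGroup.of 5 with hf_def
  have hab : a * b = b * a := hcomm 0 1 (Or.inr (by simp))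
  have hcd : c * d = d * c := hcomm 3 4 (Or.inr (by simp))
  have hac : a * c = c * a := hcomm 0 3 (Or.inr (by simp))
  have hbd : b * d = d * b := hcomm 1 4 (Or.inr (by simp))
  have hef : e * f = f * e := hcomm 2 5 (Or.inr (by simp))
  -- products
  have habe : a * b * e = 1 := by
    have := relsH32_one (show FreeGroup.of (0 : Fin 6) * FreeGroup.of 1 * FreeGroup.of 2
      ∈ relsH32 from Or.inr (by simp))
    rwa [map_mul, map_mul, of_eq, of_eq, of_eq] at this
  have hcdf : c * d * f = 1 := by
    have := relsH32_one (show FreeGroup.of (3 : Fin 6) * FreeGroup.of 4 * FreeGroup.of 5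
      ∈ relsH32 from Or.inr (by simp))
    rwa [map_mul, map_mul, of_eq, of_eq, of_eq] at this
  -- e = (a*b)⁻¹, f = (c*d)⁻¹
  have he : e = (a * b)⁻¹ := eq_inv_of_mul_eq_one_right habe
  have hf : f = (c * d)⁻¹ := eq_inv_of_mul_eq_one_right hcdf
  -- key relation: (a*b)*(c*d) = (c*d)*(a*b)
  have hK : a * b * (c * d) = c * d * (a * b) := by
    have := hef
    rw [he, hf] at this
    have h2 := congrArg (fun x => x⁻¹) this
    rw [← mul_inv_rev, ← mul_inv_rev] at this
    exact (inv_injective this).symm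
  -- primed versions for right-associated rewriting
  have hsqa : ∀ x : G, a * (a * x) = x := fun x => by rw [← mul_assoc, hsq 0, one_mul]
  have hsqc : ∀ x : G, c * (c * x) = x := fun x => by rw [← mul_assoc, hsq 3, one_mul]
  have hab' : ∀ x : G, a * (b * x) = b * (a * x) := fun x => by
    rw [← mul_assoc, hab, mul_assoc]
  have hcd' : ∀ x : G, c * (d * x) = d * (c * x) := fun x => by
    rw [← mul_assoc, hcd, mul_assoc]
  have hac' : ∀ x : G, a * (c * x) = c * (a * x) := fun x => by
    rw [← mul_assoc, hac, mul_assoc]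
  have hbd' : ∀ x : G, b * (d * x) = d * (b * x) := fun x => by
    rw [← mul_assoc, hbd, mul_assoc]
  have hK' : ∀ x : G, a * (b * (c * (d * x))) = c * (d * (a * (b * x))) := fun x => by
    have := congrArg (fun y => y * x) hK
    simpa [mul_assoc] using this
  -- main computation: a*c*b*d = b*d*a*c
  have main : ∀ x : G, a * (c * (b * (d * x))) = b * (d * (a * (c * x))) := by
    intro x
    calc a * (c * (b * (d * x)))
        = a * (c * (b * (c * (c * (d * x))))) := by rw [hsqc (d * x)]
      _ = a * (c * (b * (c * (d * (c * x))))) := by rw [hcd' x]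
      _ = c * (a * (b * (c * (d * (c * x))))) := by rw [hac']
      _ = c * (c * (d * (a * (b * (c * x))))) := by rw [hK' (c * x)]
      _ = d * (a * (b * (c * x))) := by rw [hsqc]
      _ = d * (b * (a * (c * x))) := by rw [hab' (c * x)]
      _ = b * (d * (a * (c * x))) := by rw [← hbd' (a * (c * x))]
  have goal_mul : (a * c) * (b * d) = (b * d) * (a * c) := by
    have := main 1
    simpa [mul_assoc] using this
  exact commutatorElement_eq_one_iff_mul_comm.mpr goal_mul
end

section
/- Let H = H_{3,2} be the group presented by generators y₁, …, y₆ with relations y_i² = 1 for all i, commutation [y_i, y_j] = 1 whenever i, j lie in the same row ({1,2,3} or {4,5,6}) or the same column ({1,4},{2,5},{3,6}), and the row relations y₁y₂y₃ = 1 and y₄y₅y₆ = 1. Then H is not abelian. -/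
open scoped commutatorElement

/-- Involutive 4×4 integer matrices realizing the images of the generators. -/
def mH32 : Fin 6 → Matrix (Fin 4) (Fin 4) ℤ :=
  ![!![0,1,0,0; 1,0,0,0; 0,0,0,1; 0,0,1,0],
    !![0,0,1,0; 0,0,0,1; 1,0,0,0; 0,1,0,0],
    !![0,0,0,1; 0,0,1,0; 0,1,0,0; 1,0,0,0],
    !![1,0,0,0; 0,1,0,0; 0,0,-1,0; 0,0,0,-1],
    !![1,0,0,0; 0,-1,0,0; 0,0,1,0; 0,0,0,-1],
    !![1,0,0,0; 0,-1,0,0; 0,0,-1,0; 0,0,0,1]]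

/-- The same matrices as units (each is its own inverse). -/
def fH32 : Fin 6 → (Matrix (Fin 4) (Fin 4) ℤ)ˣ := fun i =>
  ⟨mH32 i, mH32 i, by fin_cases i <;> decide, by fin_cases i <;> decide⟩

lemma fH32_rels : ∀ r ∈ relsH32, FreeGroup.lift fH32 r = 1 := by
  rintro r (⟨i, rfl⟩ | h)
  · simp only [map_mul, FreeGroup.lift_apply_of]
    ext : 1
    show mH32 i * mH32 i = 1
    fin_cases i <;> decide
  · simp only [Set.mem_insert_iff, Set.mem_singleton_iff] at h
    rcases h with rfl|rfl|rfl|rfl|rfl|rfl|rfl|rfl|rfl|rfl|rfl <;>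
    · simp only [commutatorElement_def, map_mul, map_inv, FreeGroup.lift_apply_of]
      ext : 1
      decide

/-- `H_{3,2}` is not abelian. -/
theorem stmt_19 : ¬ ∀ a b : PresentedGroup relsH32, a * b = b * a := by
  intro hab
  have h := hab ((PresentedGroup.of (rels := relsH32) 0))
    ((PresentedGroup.of (rels := relsH32) 4))
  have h2 := congrArg (PresentedGroup.toGroup fH32_rels) h
  simp only [map_mul, PresentedGroup.toGroup.of] at h2
  have h3 : mH32 0 * mH32 4 = mH32 4 * mH32 0 := congrArg Units.val h2
  exact absurd h3 (by decide)
end
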